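/- arXiv:1510.03786 — 7 statements merged into one kernel-verified Lean document; each statement's English description precedes it below -/
import Mathlib

section
/- Let B : [0,1] → ℝ be continuous with B(0) = 0, and let u and v be B-solutions. Then the Wronskian x ↦ u'(x)·v(x) − u(x)·v'(x) is a constant function on [0,1]. -/
/-!
Substituting the integral equation for `u'` and `v'` rewrites the Wronskian `u' v - u v'` as an
expression in `u`, `v` and the primitives `∫₀ˣ u' B`, `∫₀ˣ v' B` only. That expression is
differentiable although `u'` and `v'` need not be, and its derivative vanishes after a second
substitution of the integral equation; hence it is constant by the mean value theorem.
-/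

open MeasureTheory intervalIntegral

/-- `u` is a pathwise (`B`-)solution of the homogeneous equation `-u'' + B'·u = 0`:
`u` is continuously differentiable on `[0,1]` with derivative `u'`, and
`u'(x) = u'(0) + u(x)·B(x) - ∫_0^x u'(y)·B(y) dy` for all `x ∈ [0,1]`. -/
def IsBSolution (B u u' : ℝ → ℝ) : Prop :=
  (∀ x ∈ Set.Icc (0:ℝ) 1, HasDerivWithinAt u (u' x) (Set.Icc 0 1) x) ∧
  ContinuousOn u' (Set.Icc 0 1) ∧
  ∀ x ∈ Set.Icc (0:ℝ) 1, u' x = u' 0 + u x * B x - ∫ y in (0:ℝ)..x, u' y * B y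

open Set

theorem Convex.is_const_of_hasDerivWithinAt_zero {E : Type*} [NormedAddCommGroup E]
    [NormedSpace ℝ E] {f : ℝ → E} {s : Set ℝ} (hs : Convex ℝ s)
    (hf : ∀ x ∈ s, HasDerivWithinAt f 0 s x) {x y : ℝ} (hx : x ∈ s) (hy : y ∈ s) :
    f x = f y := by
  have h := hs.norm_image_sub_le_of_norm_hasDerivWithin_le hf (fun _ _ => norm_zero.le) hy hx
  rwa [zero_mul, norm_le_zero_iff, sub_eq_zero] at h

theorem ContinuousOn.hasDerivWithinAt_integral_Icc {E : Type*} [NormedAddCommGroup E]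
    [NormedSpace ℝ E] [CompleteSpace E] {f : ℝ → E} {a b x : ℝ}
    (hf : ContinuousOn f (Icc a b)) (hx : x ∈ Icc a b) :
    HasDerivWithinAt (fun t => ∫ y in a..t, f y) (f x) (Icc a b) x := by
  have : Fact (x ∈ Icc a b) := ⟨hx⟩
  exact integral_hasDerivWithinAt_right
    ((hf.mono (Icc_subset_Icc_right hx.2)).intervalIntegrable_of_Icc hx.1)
    (hf.stronglyMeasurableAtFilter_nhdsWithin measurableSet_Icc x) (hf x hx)

noncomputable def integralWronskian (B u u' v v' : ℝ → ℝ) (x : ℝ) : ℝ :=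
  u' 0 * v x - v' 0 * u x - v x * (∫ y in (0:ℝ)..x, u' y * B y) +
    u x * ∫ y in (0:ℝ)..x, v' y * B y

namespace IsBSolution

variable {B u u' v v' : ℝ → ℝ} {x : ℝ}

theorem integral_eq (hu : IsBSolution B u u') (hx : x ∈ Icc 0 1) :
    ∫ y in (0:ℝ)..x, u' y * B y = u' 0 + u x * B x - u' x := by
  linarith [hu.2.2 x hx]

theorem hasDerivWithinAt_integral (hu : IsBSolution B u u') (hB : ContinuousOn B (Icc 0 1))
    (hx : x ∈ Icc 0 1) :
    HasDerivWithinAt (fun t => ∫ y in (0:ℝ)..t, u' y * B y) (u' x * B x) (Icc 0 1) x :=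
  (hu.2.1.mul hB).hasDerivWithinAt_integral_Icc hx

theorem wronskian_eq_integralWronskian (hu : IsBSolution B u u') (hv : IsBSolution B v v')
    (hx : x ∈ Icc 0 1) :
    u' x * v x - u x * v' x = integralWronskian B u u' v v' x := by
  rw [integralWronskian, hu.integral_eq hx, hv.integral_eq hx]
  ring

theorem hasDerivWithinAt_integralWronskian (hu : IsBSolution B u u')
    (hB : ContinuousOn B (Icc 0 1)) (hv : IsBSolution B v v') (hx : x ∈ Icc 0 1) :
    HasDerivWithinAt (integralWronskian B u u' v v') 0 (Icc 0 1) x := by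
  refine ((((hv.1 x hx).const_mul (u' 0)).sub ((hu.1 x hx).const_mul (v' 0))).sub
    ((hv.1 x hx).mul (hu.hasDerivWithinAt_integral hB hx))).add
    ((hu.1 x hx).mul (hv.hasDerivWithinAt_integral hB hx)) |>.congr_deriv ?_
  rw [hu.integral_eq hx, hv.integral_eq hx]
  ring

end IsBSolution

theorem wronskian_constant_general (B u u' v v' : ℝ → ℝ)
    (hB : ContinuousOn B (Set.Icc 0 1))
    (hu : IsBSolution B u u') (hv : IsBSolution B v v') :
    ∀ x ∈ Set.Icc (0:ℝ) 1,
      u' x * v x - u x * v' x = u' 0 * v 0 - u 0 * v' 0 := by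
  intro x hx
  have h0 : (0:ℝ) ∈ Icc 0 1 := left_mem_Icc.2 zero_le_one
  rw [hu.wronskian_eq_integralWronskian hv hx, hu.wronskian_eq_integralWronskian hv h0]
  exact (convex_Icc 0 1).is_const_of_hasDerivWithinAt_zero
    (fun y hy => hu.hasDerivWithinAt_integralWronskian hB hv hy) hx h0

/-- The Wronskian of two B-solutions is constant on [0,1]. -/
theorem wronskian_constant (B u u' v v' : ℝ → ℝ)
    (hB : ContinuousOn B (Set.Icc 0 1)) (hB0 : B 0 = 0)
    (hu : IsBSolution B u u') (hv : IsBSolution B v v') :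
    ∀ x ∈ Set.Icc (0:ℝ) 1,
      u' x * v x - u x * v' x = u' 0 * v 0 - u 0 * v' 0 :=
  wronskian_constant_general B u u' v v' hB hu hv
end

section
/- Let B : [0,1] → ℝ be continuous with B(0) = 0. If u is a B-solution with u(0) = 0 and u'(0) = 0, then u(x) = 0 for all x ∈ [0,1]. -/
open MeasureTheory intervalIntegral

/-!
Both `u` and `∫_0^x u' B` are controlled by `v(x) = ∫_0^x |u'|`: if `|B| ≤ M` on `[0,1]`,
the integral equation with `u(0) = u'(0) = 0` gives `|u'| ≤ 2M v`, i.e. `v' ≤ 2M v` with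
`v(0) = 0`. Grönwall's inequality forces `v = 0`, hence `u' = 0` and `u = ∫_0^x u' = 0`.
-/

open Set

theorem ContinuousOn.integral_hasDerivWithinAt_Ici {E : Type*} [NormedAddCommGroup E]
    [NormedSpace ℝ E] [CompleteSpace E] {f : ℝ → E} {a b x : ℝ}
    (hf : ContinuousOn f (Icc a b)) (hx : x ∈ Ico a b) :
    HasDerivWithinAt (fun t => ∫ y in a..t, f y) (f x) (Ici x) x := by
  have hIcc : Icc a b ∈ nhdsWithin x (Ioi x) := Icc_mem_nhdsGT_of_mem hx
  exact integral_hasDerivWithinAt_right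
    ((hf.mono (Icc_subset_Icc le_rfl hx.2.le)).intervalIntegrable_of_Icc hx.1)
    ((hf.stronglyMeasurableAtFilter_nhdsWithin measurableSet_Icc x).filter_mono
      (nhdsWithin_le_of_mem hIcc))
    ((hf x (Ico_subset_Icc_self hx)).mono_of_mem_nhdsWithin hIcc)

theorem eq_zero_of_norm_le_mul_integral_norm {E : Type*} [NormedAddCommGroup E]
    {f : ℝ → E} {a b K : ℝ}
    (hf : ContinuousOn f (Icc a b))
    (hbound : ∀ x ∈ Icc a b, ‖f x‖ ≤ K * ∫ y in a..x, ‖f y‖) :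
    ∀ x ∈ Icc a b, f x = 0 := by
  rcases lt_or_ge b a with hba | hab
  · simp [Icc_eq_empty_of_lt hba]
  set v : ℝ → ℝ := fun x => ∫ y in a..x, ‖f y‖
  have hv_nonneg : ∀ x ∈ Icc a b, 0 ≤ v x := fun x hx =>
    integral_nonneg hx.1 fun _ _ => norm_nonneg _
  have hv_cont : ContinuousOn v (Icc a b) := by
    simpa only [uIcc_of_le hab] using
      continuousOn_primitive_interval' (hf.norm.intervalIntegrable_of_Icc hab) left_mem_uIcc
  have hv_zero : ∀ x ∈ Icc a b, v x = 0 :=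
    eq_zero_of_abs_deriv_le_mul_abs_self_of_eq_zero_right hv_cont
      (fun x hx => hf.norm.integral_hasDerivWithinAt_Ici hx) integral_same fun x hx => by
        rw [norm_norm, Real.norm_of_nonneg (hv_nonneg x (Ico_subset_Icc_self hx))]
        exact hbound x (Ico_subset_Icc_self hx)
  intro x hx
  exact norm_le_zero_iff.mp ((hbound x hx).trans_eq (mul_eq_zero_of_right K (hv_zero x hx)))

namespace IsBSolution

variable {B u u' : ℝ → ℝ}

theorem eq_add_integral_deriv (hu : IsBSolution B u u') {x : ℝ} (hx : x ∈ Icc (0:ℝ) 1) :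
    u x = u 0 + ∫ y in (0:ℝ)..x, u' y := by
  have hsub : Icc 0 x ⊆ Icc (0:ℝ) 1 := Icc_subset_Icc le_rfl hx.2
  rw [integral_eq_sub_of_hasDeriv_right_of_le hx.1
    (fun t ht => (hu.1 t (hsub ht)).continuousWithinAt.mono hsub)
    (fun t ht => (hu.1 t (hsub (Ioo_subset_Icc_self ht))).mono_of_mem_nhdsWithin
      (Icc_mem_nhdsGT_of_mem ⟨ht.1.le, ht.2.trans_le hx.2⟩))
    ((hu.2.1.mono hsub).intervalIntegrable_of_Icc hx.1)]
  ring

theorem norm_deriv_le (hu : IsBSolution B u u') (hu0 : u 0 = 0) (hu'0 : u' 0 = 0) {M : ℝ}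
    (hM : ∀ x ∈ Icc (0:ℝ) 1, ‖B x‖ ≤ M) {x : ℝ} (hx : x ∈ Icc (0:ℝ) 1) :
    ‖u' x‖ ≤ 2 * M * ∫ y in (0:ℝ)..x, ‖u' y‖ := by
  have hsub : Icc 0 x ⊆ Icc (0:ℝ) 1 := Icc_subset_Icc le_rfl hx.2
  have hV0 : 0 ≤ ∫ y in (0:ℝ)..x, ‖u' y‖ := integral_nonneg hx.1 fun _ _ => norm_nonneg _
  have hu_le : ‖u x‖ ≤ ∫ y in (0:ℝ)..x, ‖u' y‖ := by
    rw [hu.eq_add_integral_deriv hx, hu0, zero_add]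
    exact norm_integral_le_integral_norm hx.1
  have hint_le : ‖∫ y in (0:ℝ)..x, u' y * B y‖ ≤ M * ∫ y in (0:ℝ)..x, ‖u' y‖ := by
    rw [← intervalIntegral.integral_const_mul]
    refine norm_integral_le_of_norm_le hx.1 (ae_of_all _ fun y hy => ?_)
      (((hu.2.1.mono hsub).norm.const_smul M).intervalIntegrable_of_Icc hx.1)
    rw [norm_mul, mul_comm]
    exact mul_le_mul_of_nonneg_right (hM y (hsub (Ioc_subset_Icc_self hy))) (norm_nonneg _)
  calc ‖u' x‖ = ‖u x * B x - ∫ y in (0:ℝ)..x, u' y * B y‖ := by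
        rw [hu.2.2 x hx, hu'0, zero_add]
    _ ≤ ‖u x‖ * ‖B x‖ + ‖∫ y in (0:ℝ)..x, u' y * B y‖ :=
        (norm_sub_le _ _).trans_eq (by rw [norm_mul])
    _ ≤ (∫ y in (0:ℝ)..x, ‖u' y‖) * M + M * ∫ y in (0:ℝ)..x, ‖u' y‖ :=
        add_le_add (mul_le_mul hu_le (hM x hx) (norm_nonneg _) hV0) hint_le
    _ = 2 * M * ∫ y in (0:ℝ)..x, ‖u' y‖ := by ring

end IsBSolution

theorem bsolution_zero_general (B u u' : ℝ → ℝ)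
    (hB : ContinuousOn B (Set.Icc 0 1))
    (hu : IsBSolution B u u') (hu0 : u 0 = 0) (hu'0 : u' 0 = 0) :
    ∀ x ∈ Set.Icc (0:ℝ) 1, u x = 0 := by
  obtain ⟨M, hM⟩ := isCompact_Icc.exists_bound_of_continuousOn hB
  have hu'_zero : ∀ x ∈ Icc (0:ℝ) 1, u' x = 0 :=
    eq_zero_of_norm_le_mul_integral_norm hu.2.1 fun x hx => hu.norm_deriv_le hu0 hu'0 hM hx
  intro x hx
  rw [hu.eq_add_integral_deriv hx, hu0, zero_add]
  refine (integral_congr fun y hy => ?_).trans integral_zero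
  rw [uIcc_of_le hx.1] at hy
  exact hu'_zero y (Icc_subset_Icc le_rfl hx.2 hy)

/-- A B-solution with u(0) = 0 and u'(0) = 0 vanishes identically on [0,1]. -/
theorem bsolution_zero (B u u' : ℝ → ℝ)
    (hB : ContinuousOn B (Set.Icc 0 1)) (hB0 : B 0 = 0)
    (hu : IsBSolution B u u') (hu0 : u 0 = 0) (hu'0 : u' 0 = 0) :
    ∀ x ∈ Set.Icc (0:ℝ) 1, u x = 0 :=
  bsolution_zero_general B u u' hB hu hu0 hu'0
end

section
/- Let B : [0,1] → ℝ be continuous with B(0) = 0. For every pair of real numbers a, b there exists a unique B-solution u with u(0) = b and u'(0) = a. -/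
/-!
Put `v = u'`, so that `u = b + ∫₀ˣ v`. A `B`-solution with data `(a, b)` is then the same as a
continuous fixed point of the Volterra operator `v ↦ a + (b + ∫₀ˣ v)·B(x) - ∫₀ˣ v·B`, whose kernel
`B(x) - B(y)` is bounded by `2M` when `|B| ≤ M`. The `n`-th iterate of such an operator is
Lipschitz with constant `(2M)ⁿ/n!` on `C([0,1])`, so some iterate is a contraction and the
operator has exactly one fixed point. To make the operator act on continuous functions, `B` is
first extended continuously from `[0,1]` to `ℝ`, which changes no `B`-solution.
-/

open MeasureTheory intervalIntegral

open Set Function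
open scoped Nat

section IteratedContraction

variable {K : ℝ} {T : C(Icc (0:ℝ) 1, ℝ) → C(Icc (0:ℝ) 1, ℝ)}

theorem abs_iterate_apply_sub_le
    (hT : ∀ f g (x : Icc (0:ℝ) 1), |T f x - T g x| ≤
      K * ∫ y in (0:ℝ)..x, |IccExtend zero_le_one f y - IccExtend zero_le_one g y|)
    (hK : 0 ≤ K) (f g : C(Icc (0:ℝ) 1, ℝ)) (n : ℕ) (x : Icc (0:ℝ) 1) :
    |T^[n] f x - T^[n] g x| ≤ (K * x) ^ n / n ! * dist f g := by
  induction n generalizing x with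
  | zero => simpa [Real.dist_eq] using ContinuousMap.dist_apply_le_dist (f := f) (g := g) x
  | succ n ih =>
    rw [iterate_succ_apply', iterate_succ_apply']
    have hx : (0:ℝ) ≤ x := x.2.1
    calc |T (T^[n] f) x - T (T^[n] g) x|
        ≤ K * ∫ y in (0:ℝ)..x,
            |IccExtend zero_le_one (T^[n] f) y - IccExtend zero_le_one (T^[n] g) y| :=
          hT _ _ x
      _ ≤ K * ∫ y in (0:ℝ)..x, K ^ n / n ! * dist f g * y ^ n := by
          gcongr
          refine integral_mono_on hx ?_ ?_ fun y hy => ?_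
          · exact (by fun_prop : Continuous _).intervalIntegrable _ _
          · exact (by fun_prop : Continuous _).intervalIntegrable _ _
          have hy' : y ∈ Icc (0:ℝ) 1 := ⟨hy.1, hy.2.trans x.2.2⟩
          simpa only [IccExtend_of_mem _ _ hy', mul_pow, div_mul_eq_mul_div,
            mul_right_comm _ (y ^ n)] using ih ⟨y, hy'⟩
      _ = (K * x) ^ (n + 1) / (n + 1)! * dist f g := by
          rw [intervalIntegral.integral_const_mul, integral_pow, Nat.factorial_succ]
          push_cast
          field_simp
          ring

theorem existsUnique_isFixedPt_of_abs_sub_le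
    (hT : ∀ f g (x : Icc (0:ℝ) 1), |T f x - T g x| ≤
      K * ∫ y in (0:ℝ)..x, |IccExtend zero_le_one f y - IccExtend zero_le_one g y|)
    (hK : 0 ≤ K) : ∃! f, IsFixedPt T f := by
  obtain ⟨n, hn⟩ : ∃ n : ℕ, K ^ n / n ! < 1 :=
    ((FloorSemiring.tendsto_pow_div_factorial_atTop K).eventually_lt_const one_pos).exists
  have hcontr : ContractingWith (K ^ n / n !).toNNReal T^[n] := by
    refine ⟨by simpa using hn, LipschitzWith.of_dist_le_mul fun f g => ?_⟩
    rw [Real.coe_toNNReal _ (by positivity), ContinuousMap.dist_le (by positivity)]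
    intro x
    calc dist (T^[n] f x) (T^[n] g x) ≤ (K * x) ^ n / n ! * dist f g :=
          abs_iterate_apply_sub_le hT hK f g n x
      _ ≤ K ^ n / n ! * dist f g := by
          gcongr
          exacts [mul_nonneg hK x.2.1, mul_le_of_le_one_right hK x.2.2]
  have hfix := hcontr.isFixedPt_fixedPoint_iterate
  exact ⟨_, hfix, fun f hf => hcontr.fixedPoint_unique' (hf.iterate n) (hfix.iterate n)⟩

end IteratedContraction

noncomputable def bVolterra (B : ℝ → ℝ) (a b : ℝ) (v : ℝ → ℝ) (x : ℝ) : ℝ :=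
  a + (b + ∫ y in (0:ℝ)..x, v y) * B x - ∫ y in (0:ℝ)..x, v y * B y

section bVolterra

variable {B v w : ℝ → ℝ} {a b x : ℝ}

theorem bVolterra_zero (hB0 : B 0 = 0) : bVolterra B a b v 0 = a := by
  simp [bVolterra, hB0]

theorem bVolterra_congr (hx : 0 ≤ x) (h : EqOn v w (Icc 0 x)) :
    bVolterra B a b v x = bVolterra B a b w x := by
  have h' : EqOn v w (uIcc 0 x) := by rwa [uIcc_of_le hx]
  have hB' : EqOn (fun y => v y * B y) (fun y => w y * B y) (uIcc 0 x) :=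
    fun y hy => by simp only [h' hy]
  simp only [bVolterra, integral_congr h', integral_congr hB']

theorem continuous_bVolterra (hB : Continuous B) (hv : Continuous v) :
    Continuous (bVolterra B a b v) := by
  have hprim : ∀ {g : ℝ → ℝ}, Continuous g → Continuous fun x => ∫ y in (0:ℝ)..x, g y :=
    fun hg => continuous_primitive (fun _ _ => hg.intervalIntegrable _ _) 0
  unfold bVolterra
  exact (continuous_const.add ((continuous_const.add (hprim hv)).mul hB)).sub (hprim (hv.mul hB))

theorem abs_bVolterra_sub_le {M : ℝ} (hB : Continuous B) (hM : ∀ y ∈ Icc 0 x, |B y| ≤ M)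
    (hx : 0 ≤ x) (hv : Continuous v) (hw : Continuous w) :
    |bVolterra B a b v x - bVolterra B a b w x| ≤ 2 * M * ∫ y in (0:ℝ)..x, |v y - w y| := by
  have hvw : ∀ {c : ℝ → ℝ}, Continuous c → IntervalIntegrable c volume 0 x :=
    fun hc => hc.intervalIntegrable _ _
  have hdiff : bVolterra B a b v x - bVolterra B a b w x
      = (∫ y in (0:ℝ)..x, v y - w y) * B x - ∫ y in (0:ℝ)..x, (v y - w y) * B y := by
    simp only [bVolterra, sub_mul]
    rw [integral_sub (hvw hv) (hvw hw),
      integral_sub (hvw (by fun_prop : Continuous fun y => v y * B y))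
        (hvw (by fun_prop : Continuous fun y => w y * B y))]
    ring
  have hM0 : 0 ≤ M := (abs_nonneg _).trans (hM 0 ⟨le_rfl, hx⟩)
  have hI : |∫ y in (0:ℝ)..x, v y - w y| ≤ ∫ y in (0:ℝ)..x, |v y - w y| :=
    abs_integral_le_integral_abs hx
  have hIB : |∫ y in (0:ℝ)..x, (v y - w y) * B y| ≤ M * ∫ y in (0:ℝ)..x, |v y - w y| := by
    rw [← intervalIntegral.integral_const_mul]
    refine (abs_integral_le_integral_abs hx).trans <| integral_mono_on hx ?_ ?_ fun y hy => ?_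
    · exact hvw (by fun_prop)
    · exact hvw (by fun_prop)
    rw [abs_mul, mul_comm]
    exact mul_le_mul_of_nonneg_right (hM y hy) (abs_nonneg _)
  calc |bVolterra B a b v x - bVolterra B a b w x|
      ≤ |∫ y in (0:ℝ)..x, v y - w y| * |B x| + |∫ y in (0:ℝ)..x, (v y - w y) * B y| := by
        rw [hdiff, ← abs_mul]
        exact abs_sub _ _
    _ ≤ (∫ y in (0:ℝ)..x, |v y - w y|) * M + M * ∫ y in (0:ℝ)..x, |v y - w y| := by
        gcongr
        · exact integral_nonneg hx fun y _ => abs_nonneg _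
        · exact hM x ⟨hx, le_rfl⟩
    _ = 2 * M * ∫ y in (0:ℝ)..x, |v y - w y| := by ring

end bVolterra

noncomputable def bVolterraOp {B : ℝ → ℝ} (hB : Continuous B) (a b : ℝ)
    (f : C(Icc (0:ℝ) 1, ℝ)) : C(Icc (0:ℝ) 1, ℝ) :=
  ⟨fun x => bVolterra B a b (IccExtend zero_le_one f) x,
    (continuous_bVolterra hB f.continuous.Icc_extend').comp continuous_subtype_val⟩

section bVolterraOp

variable {B : ℝ → ℝ} (hB : Continuous B) {a b : ℝ}

theorem bVolterraOp_apply (f : C(Icc (0:ℝ) 1, ℝ)) (x : Icc (0:ℝ) 1) :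
    bVolterraOp hB a b f x = bVolterra B a b (IccExtend zero_le_one f) x :=
  rfl

theorem abs_bVolterraOp_sub_le {M : ℝ} (hM : ∀ y ∈ Icc (0:ℝ) 1, |B y| ≤ M)
    (f g : C(Icc (0:ℝ) 1, ℝ)) (x : Icc (0:ℝ) 1) :
    |bVolterraOp hB a b f x - bVolterraOp hB a b g x| ≤
      2 * M * ∫ y in (0:ℝ)..x, |IccExtend zero_le_one f y - IccExtend zero_le_one g y| :=
  abs_bVolterra_sub_le hB (fun y hy => hM y ⟨hy.1, hy.2.trans x.2.2⟩) x.2.1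
    f.continuous.Icc_extend' g.continuous.Icc_extend'

end bVolterraOp

namespace IsBSolution

variable {B B' u u' : ℝ → ℝ} {x : ℝ}

theorem congr (h : EqOn B B' (Icc 0 1)) (hu : IsBSolution B u u') : IsBSolution B' u u' := by
  refine ⟨hu.1, hu.2.1, fun x hx => ?_⟩
  have hsub : uIcc 0 x ⊆ Icc 0 1 := uIcc_subset_Icc ⟨le_rfl, zero_le_one⟩ hx
  have hint : EqOn (fun y => u' y * B y) (fun y => u' y * B' y) (uIcc 0 x) :=
    fun y hy => by simp only [h (hsub hy)]
  rw [hu.2.2 x hx, h hx, integral_congr hint]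

theorem eq_add_integral (hu : IsBSolution B u u') (hx : x ∈ Icc (0:ℝ) 1) :
    u x = u 0 + ∫ y in (0:ℝ)..x, u' y := by
  have h0x : Icc (0:ℝ) x ⊆ Icc 0 1 := Icc_subset_Icc le_rfl hx.2
  have hcu : ContinuousOn u (Icc (0:ℝ) 1) := fun t ht => (hu.1 t ht).continuousWithinAt
  have hFTC : ∫ y in (0:ℝ)..x, u' y = u x - u 0 := by
    refine integral_eq_sub_of_hasDeriv_right_of_le hx.1 (hcu.mono h0x) (fun t ht => ?_)
      ((hu.2.1.mono h0x).intervalIntegrable_of_Icc hx.1)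
    exact (hu.1 t (h0x (Ioo_subset_Icc_self ht))).mono_of_mem_nhdsWithin
      (Icc_mem_nhdsGT_of_mem ⟨ht.1.le, ht.2.trans_le hx.2⟩)
  linarith

theorem eq_bVolterra (hu : IsBSolution B u u') (hx : x ∈ Icc (0:ℝ) 1) :
    u' x = bVolterra B (u' 0) (u 0) u' x := by
  rw [bVolterra, ← hu.eq_add_integral hx]
  exact hu.2.2 x hx

theorem isFixedPt_bVolterraOp {a b : ℝ} (hB : Continuous B) (hu : IsBSolution B u u')
    (ha : u' 0 = a) (hb : u 0 = b) :
    IsFixedPt (bVolterraOp hB a b) ⟨(Icc 0 1).domRestrict u', hu.2.1.domRestrict⟩ := by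
  subst ha hb
  ext x
  rw [bVolterraOp_apply,
    bVolterra_congr x.2.1 fun y hy => IccExtend_of_mem _ _ ⟨hy.1, hy.2.trans x.2.2⟩]
  exact (hu.eq_bVolterra x.2).symm

end IsBSolution

theorem isBSolution_of_eq_bVolterra {B v : ℝ → ℝ} {a b : ℝ} (hB0 : B 0 = 0)
    (hv : Continuous v) (h : ∀ x ∈ Icc (0:ℝ) 1, v x = bVolterra B a b v x) :
    IsBSolution B (fun x => b + ∫ y in (0:ℝ)..x, v y) v := by
  have hv0 : v 0 = a := (h 0 ⟨le_rfl, zero_le_one⟩).trans (bVolterra_zero hB0)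
  refine ⟨fun x _ => ?_, hv.continuousOn, fun x hx => ?_⟩
  · exact ((integral_hasDerivAt_right (hv.intervalIntegrable 0 x)
      (hv.stronglyMeasurableAtFilter _ _) hv.continuousAt).const_add b).hasDerivWithinAt
  · rw [h x hx, hv0, bVolterra]

/-- Existence and uniqueness of the B-solution with prescribed initial data
u(0) = b, u'(0) = a. -/
theorem bsolution_exists_unique (B : ℝ → ℝ)
    (hB : ContinuousOn B (Set.Icc 0 1)) (hB0 : B 0 = 0) (a b : ℝ) :
    (∃ u u' : ℝ → ℝ, IsBSolution B u u' ∧ u 0 = b ∧ u' 0 = a) ∧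
    (∀ u u' w w' : ℝ → ℝ, IsBSolution B u u' → IsBSolution B w w' →
      u 0 = b → u' 0 = a → w 0 = b → w' 0 = a →
      ∀ x ∈ Set.Icc (0:ℝ) 1, u x = w x) := by
  set Bc := IccExtend zero_le_one ((Icc (0:ℝ) 1).domRestrict B)
  have hBc : Continuous Bc := hB.domRestrict.Icc_extend'
  have hBcB : EqOn Bc B (Icc 0 1) := fun x hx => IccExtend_of_mem _ _ hx
  have hBc0 : Bc 0 = 0 := (hBcB ⟨le_rfl, zero_le_one⟩).trans hB0
  obtain ⟨M, hM⟩ := isCompact_Icc.exists_bound_of_continuousOn hB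
  have hMc : ∀ y ∈ Icc (0:ℝ) 1, |Bc y| ≤ M := fun y hy => hBcB hy ▸ hM y hy
  have hM0 : 0 ≤ M := (abs_nonneg _).trans (hMc 0 ⟨le_rfl, zero_le_one⟩)
  obtain ⟨f, hf, hf_unique⟩ := existsUnique_isFixedPt_of_abs_sub_le
    (abs_bVolterraOp_sub_le hBc (a := a) (b := b) hMc) (by positivity)
  have hv : ∀ x ∈ Icc (0:ℝ) 1,
      IccExtend zero_le_one f x = bVolterra Bc a b (IccExtend zero_le_one f) x := fun x hx => by
    rw [IccExtend_of_mem _ _ hx]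
    exact (DFunLike.congr_fun hf ⟨x, hx⟩).symm
  refine ⟨⟨_, _, (isBSolution_of_eq_bVolterra hBc0 f.continuous.Icc_extend' hv).congr hBcB,
    by simp, (hv 0 ⟨le_rfl, zero_le_one⟩).trans (bVolterra_zero hBc0)⟩, ?_⟩
  intro u u' w w' hu hw hub hua hwb hwa x hx
  have hfu := hf_unique _ ((hu.congr hBcB.symm).isFixedPt_bVolterraOp hBc hua hub)
  have hfw := hf_unique _ ((hw.congr hBcB.symm).isFixedPt_bVolterraOp hBc hwa hwb)
  have hu'w' : EqOn u' w' (uIcc 0 x) := fun y hy =>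
    DFunLike.congr_fun (hfu.trans hfw.symm) ⟨y, uIcc_subset_Icc ⟨le_rfl, zero_le_one⟩ hx hy⟩
  rw [hu.eq_add_integral hx, hw.eq_add_integral hx, hub, hwb, integral_congr hu'w']
end

section
/- Let B : [0,1] → ℝ be continuous with B(0) = 0, and let u, v be B-solutions satisfying the boundary conditions u(0) = 0, u(1) = 1, v(0) = 1, v(1) = 0. Then the constant value α := u'(0)·v(0) − u(0)·v'(0) of the Wronskian u'v − uv' is nonzero. -/
/-!
With `u 0 = 0` and `v 0 = 1` the Wronskian at `0` is just `u'(0)`. If it vanished, `u` would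
solve the integral equation with zero Cauchy data, so `|u'(x)| ≤ |u(x)|·|B(x)| + ∫₀ˣ |u'|·|B| ≤
2‖B‖_∞ ∫₀ˣ |u'|` (using `|u(x)| ≤ ∫₀ˣ |u'|`). Grönwall's inequality then forces `u' ≡ 0`, hence
`u ≡ 0`, contradicting `u 1 = 1`.
-/

open MeasureTheory intervalIntegral

open Set

theorem hasDerivWithinAt_Ici_integral_of_continuousOn {g : ℝ → ℝ} {a b x : ℝ}
    (hg : ContinuousOn g (Icc a b)) (hx : x ∈ Ico a b) :
    HasDerivWithinAt (fun t => ∫ y in a..t, g y) (g x) (Ici x) x := by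
  have hIcc : Icc a b ∈ nhdsWithin x (Ioi x) := Icc_mem_nhdsGT_of_mem hx
  refine integral_hasDerivWithinAt_right ?_ ?_ ?_
  · exact (hg.mono (uIcc_subset_Icc (left_mem_Icc.2 (hx.1.trans hx.2.le))
      (Ico_subset_Icc_self hx))).intervalIntegrable
  · exact ((hg.stronglyMeasurableAtFilter_nhdsWithin measurableSet_Icc x).filter_mono
      (nhdsWithin_le_of_mem hIcc))
  · exact (hg x (Ico_subset_Icc_self hx)).mono_of_mem_nhdsWithin hIcc

/-- Grönwall's inequality in integral form, with zero initial value. -/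
theorem eq_zero_of_le_mul_integral {g : ℝ → ℝ} {K a b : ℝ} (hg : ContinuousOn g (Icc a b))
    (hg_nonneg : ∀ x ∈ Icc a b, 0 ≤ g x) (hle : ∀ x ∈ Icc a b, g x ≤ K * ∫ y in a..x, g y) :
    ∀ x ∈ Icc a b, g x = 0 := by
  intro x hx
  have hab : a ≤ b := hx.1.trans hx.2
  have hG : ∀ t ∈ Icc a b, ∫ y in a..t, g y = 0 := by
    refine eq_zero_of_abs_deriv_le_mul_abs_self_of_eq_zero_right
      (f := fun t => ∫ y in a..t, g y) (K := |K|) ?_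
      (fun t ht => hasDerivWithinAt_Ici_integral_of_continuousOn hg ht) integral_same ?_
    · rw [← uIcc_of_le hab]
      exact continuousOn_primitive_interval (hg.integrableOn_Icc.mono_set (uIcc_of_le hab).le)
    · intro t ht
      have ht' := Ico_subset_Icc_self ht
      rw [Real.norm_eq_abs, Real.norm_eq_abs, abs_of_nonneg (hg_nonneg t ht'), ← abs_mul]
      exact (hle t ht').trans (le_abs_self _)
  have hgx := hle x hx
  rw [hG x hx, mul_zero] at hgx
  exact le_antisymm hgx (hg_nonneg x hx)

namespace IsBSolution

variable {B u u' : ℝ → ℝ}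

theorem continuousOn (hu : IsBSolution B u u') : ContinuousOn u (Icc 0 1) :=
  fun x hx => (hu.1 x hx).continuousWithinAt

theorem integral_deriv (hu : IsBSolution B u u') {x : ℝ} (hx : x ∈ Icc (0 : ℝ) 1) :
    ∫ y in (0 : ℝ)..x, u' y = u x - u 0 := by
  have hsub : Icc 0 x ⊆ Icc 0 1 := Icc_subset_Icc_right hx.2
  refine integral_eq_sub_of_hasDeriv_right_of_le hx.1 (hu.continuousOn.mono hsub) (fun t ht => ?_)
    (hu.2.1.mono (uIcc_of_le hx.1 ▸ hsub)).intervalIntegrable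
  have ht01 : Icc (0 : ℝ) 1 ∈ nhds t := Icc_mem_nhds ht.1 (ht.2.trans_le hx.2)
  exact ((hu.1 t (mem_of_mem_nhds ht01)).hasDerivAt ht01).hasDerivWithinAt

theorem abs_deriv_le (hB : ContinuousOn B (Icc 0 1)) (hu : IsBSolution B u u') {M : ℝ}
    (hBM : ∀ x ∈ Icc (0 : ℝ) 1, |B x| ≤ M) (hu0 : u 0 = 0) (hu'0 : u' 0 = 0)
    {x : ℝ} (hx : x ∈ Icc (0 : ℝ) 1) :
    |u' x| ≤ 2 * M * ∫ y in (0 : ℝ)..x, |u' y| := by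
  have hsub : uIcc 0 x ⊆ Icc 0 1 := uIcc_subset_Icc (left_mem_Icc.2 zero_le_one) hx
  have hu_le : |u x| ≤ ∫ y in (0 : ℝ)..x, |u' y| := by
    have hFTC := hu.integral_deriv hx
    rw [hu0, sub_zero] at hFTC
    rw [← hFTC]
    exact abs_integral_le_integral_abs hx.1
  have hint_le : |∫ y in (0 : ℝ)..x, u' y * B y| ≤ M * ∫ y in (0 : ℝ)..x, |u' y| := by
    calc |∫ y in (0 : ℝ)..x, u' y * B y| ≤ ∫ y in (0 : ℝ)..x, |u' y * B y| :=
          abs_integral_le_integral_abs hx.1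
      _ ≤ ∫ y in (0 : ℝ)..x, M * |u' y| := by
          refine integral_mono_on hx.1 ((hu.2.1.mul hB).mono hsub).intervalIntegrable.abs
            ((continuousOn_const.mul hu.2.1.abs).mono hsub).intervalIntegrable fun y hy => ?_
          have hy01 := hsub (Icc_subset_uIcc hy)
          rw [abs_mul, mul_comm M]
          exact mul_le_mul_of_nonneg_left (hBM y hy01) (abs_nonneg _)
      _ = M * ∫ y in (0 : ℝ)..x, |u' y| := integral_const_mul M _
  calc |u' x| = |u x * B x - ∫ y in (0 : ℝ)..x, u' y * B y| := by
        rw [hu.2.2 x hx, hu'0, zero_add]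
    _ ≤ |u x| * |B x| + |∫ y in (0 : ℝ)..x, u' y * B y| := by
        rw [← abs_mul]; exact abs_sub _ _
    _ ≤ (∫ y in (0 : ℝ)..x, |u' y|) * M + M * ∫ y in (0 : ℝ)..x, |u' y| := by
        gcongr
        · exact integral_nonneg hx.1 fun y _ => abs_nonneg _
        · exact hBM x hx
    _ = 2 * M * ∫ y in (0 : ℝ)..x, |u' y| := by ring

theorem eq_zero_of_deriv_eq_zero (hB : ContinuousOn B (Icc 0 1)) (hu : IsBSolution B u u')
    (hu0 : u 0 = 0) (hu'0 : u' 0 = 0) : ∀ x ∈ Icc (0 : ℝ) 1, u x = 0 := by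
  obtain ⟨M, hBM⟩ := isCompact_Icc.exists_bound_of_continuousOn hB
  have hu' : ∀ x ∈ Icc (0 : ℝ) 1, |u' x| = 0 :=
    eq_zero_of_le_mul_integral hu.2.1.abs (fun x _ => abs_nonneg _)
      fun x hx => hu.abs_deriv_le hB hBM hu0 hu'0 hx
  intro x hx
  have hsub : uIcc 0 x ⊆ Icc 0 1 := uIcc_subset_Icc (left_mem_Icc.2 zero_le_one) hx
  have hFTC := hu.integral_deriv hx
  rw [integral_congr fun y hy => abs_eq_zero.1 (hu' y (hsub hy)), hu0] at hFTC
  simpa using hFTC.symm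

end IsBSolution

theorem wronskian_ne_zero_general (B u u' v v' : ℝ → ℝ)
    (hB : ContinuousOn B (Set.Icc 0 1))
    (hu : IsBSolution B u u')
    (hu0 : u 0 = 0) (hu1 : u 1 = 1) (hv0 : v 0 = 1) :
    u' 0 * v 0 - u 0 * v' 0 ≠ 0 := by
  rw [hu0, hv0, mul_one, zero_mul, sub_zero]
  intro hu'0
  have hu1' := hu.eq_zero_of_deriv_eq_zero hB hu0 hu'0 1 (right_mem_Icc.2 zero_le_one)
  exact one_ne_zero (hu1 ▸ hu1')

/-- For B-solutions with the boundary conditions u(0)=0, u(1)=1, v(0)=1, v(1)=0,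
the constant value of the Wronskian is nonzero. -/
theorem wronskian_ne_zero (B u u' v v' : ℝ → ℝ)
    (hB : ContinuousOn B (Set.Icc 0 1)) (hB0 : B 0 = 0)
    (hu : IsBSolution B u u') (hv : IsBSolution B v v')
    (hu0 : u 0 = 0) (hu1 : u 1 = 1) (hv0 : v 0 = 1) (hv1 : v 1 = 0) :
    u' 0 * v 0 - u 0 * v' 0 ≠ 0 :=
  wronskian_ne_zero_general B u u' v v' hB hu hu0 hu1 hv0
end

section
/- Let B : [0,1] → ℝ be continuous with B(0) = 0, and let u : [0,1] → ℝ be continuously differentiable and satisfy, for every x ∈ [0,1], the integral equation x − u(x) = (x−1)·∫_0^x (y·u'(y) + u(y))·B(y) dy − x·∫_x^1 ((1−y)·u'(y) − u(y))·B(y) dy. Then u(0) = 0, u(1) = 1, and u is a B-solution. -/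
open MeasureTheory intervalIntegral

/-!
Differentiating the integral equation gives
`u' x = 1 - ∫₀ˣ f + ∫ₓ¹ g - ((x - 1) f x + x g x)` with `f = (y u' + u) B` and
`g = ((1 - y) u' - u) B`. Pointwise `(x - 1) f x + x g x = -u x B x` and `f + g = u' B`,
so subtracting the value at `0` (where `B 0 = 0`) leaves exactly the `B`-solution identity.
-/

open Set

theorem ContinuousOn.intervalIntegrable_of_mem_Icc {E : Type*} [NormedAddCommGroup E]
    {f : ℝ → E} {a b : ℝ} (hf : ContinuousOn f (Icc a b))
    {s t : ℝ} (hs : s ∈ Icc a b) (ht : t ∈ Icc a b) : IntervalIntegrable f volume s t :=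
  (hf.mono (uIcc_subset_Icc hs ht)).intervalIntegrable

section

variable {E : Type*} [NormedAddCommGroup E] [NormedSpace ℝ E] [CompleteSpace E]
  {f : ℝ → E} {a b x : ℝ}

theorem ContinuousOn.hasDerivWithinAt_integral_Icc_right (hf : ContinuousOn f (Icc a b))
    (hx : x ∈ Icc a b) :
    HasDerivWithinAt (fun t => ∫ y in a..t, f y) (f x) (Icc a b) x :=
  have : Fact (x ∈ Icc a b) := ⟨hx⟩
  integral_hasDerivWithinAt_right
    (hf.intervalIntegrable_of_mem_Icc (left_mem_Icc.2 (hx.1.trans hx.2)) hx)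
    (hf.stronglyMeasurableAtFilter_nhdsWithin measurableSet_Icc x) (hf x hx)

theorem ContinuousOn.hasDerivWithinAt_integral_Icc_left (hf : ContinuousOn f (Icc a b))
    (hx : x ∈ Icc a b) :
    HasDerivWithinAt (fun t => ∫ y in t..b, f y) (-f x) (Icc a b) x :=
  have : Fact (x ∈ Icc a b) := ⟨hx⟩
  integral_hasDerivWithinAt_left
    (hf.intervalIntegrable_of_mem_Icc hx (right_mem_Icc.2 (hx.1.trans hx.2)))
    (hf.stronglyMeasurableAtFilter_nhdsWithin measurableSet_Icc x) (hf x hx)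

end

theorem hasDerivWithinAt_of_integral_equation {u f g : ℝ → ℝ}
    (hf : ContinuousOn f (Icc 0 1)) (hg : ContinuousOn g (Icc 0 1))
    (heq : ∀ x ∈ Icc (0:ℝ) 1,
      x - u x = (x - 1) * (∫ y in (0:ℝ)..x, f y) - x * (∫ y in x..(1:ℝ), g y))
    {x : ℝ} (hx : x ∈ Icc (0:ℝ) 1) :
    HasDerivWithinAt u
      (1 - (∫ y in (0:ℝ)..x, f y) + (∫ y in x..(1:ℝ), g y) - ((x - 1) * f x + x * g x))
      (Icc 0 1) x := by
  have hid : HasDerivWithinAt (fun t : ℝ => t) 1 (Icc 0 1) x := hasDerivWithinAt_id x _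
  have hrhs : HasDerivWithinAt
      (fun t => t - (t - 1) * (∫ y in (0:ℝ)..t, f y) + t * (∫ y in t..(1:ℝ), g y))
      (1 - (1 * (∫ y in (0:ℝ)..x, f y) + (x - 1) * f x)
        + (1 * (∫ y in x..(1:ℝ), g y) + x * -g x))
      (Icc 0 1) x :=
    (hid.sub ((hid.sub_const 1).mul (hf.hasDerivWithinAt_integral_Icc_right hx))).add
      (hid.mul (hg.hasDerivWithinAt_integral_Icc_left hx))
  refine (hrhs.congr (fun t ht => ?_) ?_).congr_deriv (by ring)
  · linarith [heq t ht]
  · linarith [heq x hx]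

/-- A continuously differentiable solution of the pathwise integral equation
x - u(x) = (x-1)·∫_0^x (y·u'(y)+u(y))·B(y) dy - x·∫_x^1 ((1-y)·u'(y)-u(y))·B(y) dy
satisfies u(0)=0, u(1)=1 and is a B-solution. -/
theorem integral_equation_gives_bsolution (B u u' : ℝ → ℝ)
    (hB : ContinuousOn B (Set.Icc 0 1)) (hB0 : B 0 = 0)
    (hderiv : ∀ x ∈ Set.Icc (0:ℝ) 1, HasDerivWithinAt u (u' x) (Set.Icc 0 1) x)
    (hcont : ContinuousOn u' (Set.Icc 0 1))
    (heq : ∀ x ∈ Set.Icc (0:ℝ) 1,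
      x - u x = (x - 1) * (∫ y in (0:ℝ)..x, (y * u' y + u y) * B y)
        - x * (∫ y in x..(1:ℝ), ((1 - y) * u' y - u y) * B y)) :
    u 0 = 0 ∧ u 1 = 1 ∧ IsBSolution B u u' := by
  have h0 : (0:ℝ) ∈ Icc (0:ℝ) 1 := left_mem_Icc.2 zero_le_one
  have h1 : (1:ℝ) ∈ Icc (0:ℝ) 1 := right_mem_Icc.2 zero_le_one
  set f : ℝ → ℝ := fun y => (y * u' y + u y) * B y
  set g : ℝ → ℝ := fun y => ((1 - y) * u' y - u y) * B y
  have hu : ContinuousOn u (Icc 0 1) := fun x hx => (hderiv x hx).continuousWithinAt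
  have hf : ContinuousOn f (Icc 0 1) := ((continuousOn_id.mul hcont).add hu).mul hB
  have hg : ContinuousOn g (Icc 0 1) :=
    (((continuousOn_const.sub continuousOn_id).mul hcont).sub hu).mul hB
  have hu' : ∀ x ∈ Icc (0:ℝ) 1,
      u' x = 1 - (∫ y in (0:ℝ)..x, f y) + (∫ y in x..(1:ℝ), g y) + u x * B x := by
    intro x hx
    rw [(uniqueDiffOn_Icc one_pos x hx).eq_deriv _ (hderiv x hx)
      (hasDerivWithinAt_of_integral_equation hf hg heq hx)]
    ring
  have hu0 : u 0 = 0 := by simpa using heq 0 h0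
  have hu1 : 1 - u 1 = 0 := by simpa using heq 1 h1
  refine ⟨hu0, by linarith, hderiv, hcont, fun x hx => ?_⟩
  have hsplit : (∫ y in (0:ℝ)..x, u' y * B y)
      = (∫ y in (0:ℝ)..x, f y)
        + ((∫ y in (0:ℝ)..(1:ℝ), g y) - ∫ y in x..(1:ℝ), g y) := by
    rw [← integral_add_adjacent_intervals (hg.intervalIntegrable_of_mem_Icc h0 hx)
      (hg.intervalIntegrable_of_mem_Icc hx h1), add_sub_cancel_right,
      ← integral_add (hf.intervalIntegrable_of_mem_Icc h0 hx)
      (hg.intervalIntegrable_of_mem_Icc h0 hx)]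
    exact integral_congr fun y _ => by simp only [f, g]; ring
  rw [hu' x hx, hu' 0 h0, hsplit, hB0, integral_same]
  ring
end

section
/- Let B : [0,1] → ℝ be continuous with B(0) = 0, and let u be a B-solution. Then for every h ∈ H1: ∫_0^1 u'(x)h'(x) dx − ∫_0^1 (u'(x)h(x) + u(x)h'(x))·B(x) dx = 0; that is, E(u,h) = 0 for all h ∈ H1, so u solves the homogeneous equation Lu = 0 in the weak sense. -/
open MeasureTheory intervalIntegral

/-- `h` belongs to `H1` with (a.e.) derivative `g`: `h` is absolutely continuous on
`[0,1]` with `h(0) = h(1) = 0`, i.e. `h(x) = ∫_0^x g` for an integrable `g` with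
`∫_0^1 g = 0`. -/
def MemH1 (h g : ℝ → ℝ) : Prop :=
  MeasureTheory.IntegrableOn g (Set.Icc 0 1) ∧
  (∫ t in (0:ℝ)..1, g t) = 0 ∧
  ∀ x ∈ Set.Icc (0:ℝ) 1, h x = ∫ t in (0:ℝ)..x, g t

/-- The pathwise bilinear form `E(f,h)`, the weak meaning of `⟨Lf, h⟩` for
`L = -d²/dx² + B'`; here `f'` and `h'` are the derivatives of `f` and `h`. -/
noncomputable def Eform (B f f' h h' : ℝ → ℝ) : ℝ :=
  (∫ x in (0:ℝ)..1, f' x * h' x) -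
    ∫ x in (0:ℝ)..1, (f' x * h x + f x * h' x) * B x

/-- The Green operator `T` built from the independent solutions `u`, `v` and the
Wronskian `α`: `(Tf)(x) = α⁻¹·(v(x)·∫_0^x u f + u(x)·∫_x^1 v f)`. -/
noncomputable def greenOp (α : ℝ) (u v f : ℝ → ℝ) (x : ℝ) : ℝ :=
  α⁻¹ * (v x * (∫ y in (0:ℝ)..x, u y * f y) + u x * (∫ y in x..(1:ℝ), v y * f y))

/-- The derivative of `Tf`:
`(Tf)'(x) = α⁻¹·(v'(x)·∫_0^x u f + u'(x)·∫_x^1 v f)`. -/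
noncomputable def greenOpDeriv (α : ℝ) (u u' v v' f : ℝ → ℝ) (x : ℝ) : ℝ :=
  α⁻¹ * (v' x * (∫ y in (0:ℝ)..x, u y * f y) + u' x * (∫ y in x..(1:ℝ), v y * f y))

/-!
Integrate the defining identity `u' = u'(0) + u B - F`, `F(x) = ∫₀ˣ u' B`, against `h' = g`.
The terms `u B h'` cancel against the potential term of `E(u,h)`, and `u'(0) ∫₀¹ g = 0`, so
`E(u,h) = -∫₀¹ (h' F + h F')`. By the product rule for the absolutely continuous functions `h` and
`F`, this is `-(h(1) F(1) - h(0) F(0)) = 0`.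
-/

open Set

theorem integral_mul_primitive_add_integral_primitive_mul {f g : ℝ → ℝ} {a b : ℝ}
    (hf : IntervalIntegrable f volume a b) (hg : IntervalIntegrable g volume a b) :
    ((∫ x in a..b, f x * ∫ t in a..x, g t) + ∫ x in a..b, (∫ t in a..x, f t) * g x) =
      (∫ x in a..b, f x) * ∫ x in a..b, g x := by
  have ha : a ∈ uIcc a b := left_mem_uIcc
  have hF := hf.absolutelyContinuousOnInterval_intervalIntegral ha
  have hG := hg.absolutelyContinuousOnInterval_intervalIntegral ha
  have hparts := hF.integral_deriv_mul_eq_sub hG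
  simp only [integral_same, mul_zero, sub_zero] at hparts
  rw [← intervalIntegral.integral_add, ← hparts]
  · refine integral_congr_ae ?_
    filter_upwards [hf.ae_hasDerivAt_integral, hg.ae_hasDerivAt_integral] with x hfx hgx hx
    have hx' := uIoc_subset_uIcc hx
    rw [(hfx hx' a ha).deriv, (hgx hx' a ha).deriv]
  · exact hf.mul_continuousOn hG.continuousOn
  · exact hg.continuousOn_mul hF.continuousOn

namespace IsBSolution

variable {B u u' : ℝ → ℝ}

theorem integral_deriv_mul (hB : ContinuousOn B (Icc 0 1)) (hu : IsBSolution B u u')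
    {g : ℝ → ℝ} (hg : IntervalIntegrable g volume 0 1) :
    (∫ x in (0:ℝ)..1, u' x * g x) =
      u' 0 * (∫ x in (0:ℝ)..1, g x) + (∫ x in (0:ℝ)..1, u x * B x * g x) -
        ∫ x in (0:ℝ)..1, g x * ∫ y in (0:ℝ)..x, u' y * B y := by
  have hu_cont := hu.continuousOn
  obtain ⟨-, hu'_cont, hu'_eq⟩ := hu
  rw [← uIcc_of_le zero_le_one] at hB hu_cont hu'_cont hu'_eq
  have huBg : IntervalIntegrable (fun x => u x * B x * g x) volume 0 1 :=
    hg.continuousOn_mul (hu_cont.mul hB)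
  have hgF : IntervalIntegrable (fun x => g x * ∫ y in (0:ℝ)..x, u' y * B y) volume 0 1 :=
    hg.mul_continuousOn <|
      continuousOn_primitive_interval' (hu'_cont.mul hB).intervalIntegrable left_mem_uIcc
  rw [← intervalIntegral.integral_const_mul, ← intervalIntegral.integral_add (hg.const_mul _) huBg,
    ← intervalIntegral.integral_sub ((hg.const_mul _).add huBg) hgF]
  refine integral_congr fun x hx => ?_
  simp only [hu'_eq x hx]
  ring

theorem eform_eq (hB : ContinuousOn B (Icc 0 1)) (hu : IsBSolution B u u') {h g : ℝ → ℝ}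
    (hg : IntervalIntegrable g volume 0 1) (hh : ∀ x ∈ Icc (0:ℝ) 1, h x = ∫ t in (0:ℝ)..x, g t) :
    Eform B u u' h g =
      u' 0 * (∫ x in (0:ℝ)..1, g x) -
        ((∫ x in (0:ℝ)..1, g x * ∫ y in (0:ℝ)..x, u' y * B y) +
          ∫ x in (0:ℝ)..1, (∫ t in (0:ℝ)..x, g t) * (u' x * B x)) := by
  have h_bulk := hu.integral_deriv_mul hB hg
  have hu_cont := hu.continuousOn
  have hw_cont : ContinuousOn (fun y => u' y * B y) (Icc 0 1) := hu.2.1.mul hB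
  rw [← uIcc_of_le zero_le_one] at hB hu_cont hw_cont hh
  have hHw : IntervalIntegrable (fun x => (∫ t in (0:ℝ)..x, g t) * (u' x * B x)) volume 0 1 :=
    ((continuousOn_primitive_interval' hg left_mem_uIcc).mul hw_cont).intervalIntegrable
  have huBg : IntervalIntegrable (fun x => u x * B x * g x) volume 0 1 :=
    hg.continuousOn_mul (hu_cont.mul hB)
  have h_potential : (∫ x in (0:ℝ)..1, (u' x * h x + u x * g x) * B x) =
      (∫ x in (0:ℝ)..1, (∫ t in (0:ℝ)..x, g t) * (u' x * B x)) +
        ∫ x in (0:ℝ)..1, u x * B x * g x := by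
    rw [← intervalIntegral.integral_add hHw huBg]
    refine integral_congr fun x hx => ?_
    simp only [hh x hx]
    ring
  rw [Eform, h_bulk, h_potential]
  ring

end IsBSolution

theorem bsolution_weak_solution_general (B u u' : ℝ → ℝ)
    (hB : ContinuousOn B (Set.Icc 0 1))
    (hu : IsBSolution B u u') :
    ∀ h g : ℝ → ℝ, MemH1 h g → Eform B u u' h g = 0 := by
  intro h g ⟨hg, hg_mean, hh⟩
  have hgI : IntervalIntegrable g volume 0 1 :=
    (intervalIntegrable_iff_integrableOn_Icc_of_le zero_le_one).2 hg
  have hwI : IntervalIntegrable (fun y => u' y * B y) volume 0 1 :=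
    (hu.2.1.mul hB).intervalIntegrable_of_Icc zero_le_one
  rw [hu.eform_eq hB hgI hh, integral_mul_primitive_add_integral_primitive_mul hgI hwI, hg_mean]
  ring

/-- A B-solution solves the homogeneous equation `Lu = 0` in the weak sense:
`E(u,h) = 0` for all `h ∈ H1`. -/
theorem bsolution_weak_solution (B u u' : ℝ → ℝ)
    (hB : ContinuousOn B (Set.Icc 0 1)) (hB0 : B 0 = 0)
    (hu : IsBSolution B u u') :
    ∀ h g : ℝ → ℝ, MemH1 h g → Eform B u u' h g = 0 :=
  bsolution_weak_solution_general B u u' hB hu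
end

section
/- Let B : [0,1] → ℝ be continuous with B(0) = 0, and suppose there exist B-solutions u, v with u(0) = 0, u(1) = 1, v(0) = 1, v(1) = 0. If w ∈ H1 satisfies E(w,h) = 0 for every h ∈ H1, then w(x) = 0 for all x ∈ [0,1]. (Uniqueness of the weak solution of the homogeneous Dirichlet problem Lw = 0.) -/
open MeasureTheory intervalIntegral

/-!
Testing `E(w, ·) = 0` against `h = ∫₀ˣ g` and integrating `∫ w' B h` by parts shows that the
first integral `w' - w B + ∫₀ˣ w' B` is orthogonal to every bounded `g` of mean zero, hence a.e.
constant (du Bois-Reymond). So `w` is a classical `B`-solution with `w(0) = 0`. By Grönwall, a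
`B`-solution with `f(0) = f'(0) = 0` vanishes: applied to `u` this gives `u'(0) ≠ 0`, and applied
to `u'(0) w - w'(0) u`, together with `w(1) = 0` and `u(1) = 1`, it gives `w'(0) = 0` and `w = 0`.
-/

open Set Topology

theorem ContinuousOn.intervalIntegrable_of_mem_Icc_s13 {f : ℝ → ℝ} {a b x : ℝ}
    (hf : ContinuousOn f (Icc a b)) (hx : x ∈ Icc a b) : IntervalIntegrable f volume a x :=
  (hf.mono (Icc_subset_Icc_right hx.2)).intervalIntegrable_of_Icc hx.1

theorem integral_congr_of_ae_eq_restrict_Ioc {f g : ℝ → ℝ} {a b x : ℝ}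
    (h : f =ᵐ[volume.restrict (Ioc a b)] g) (hx : x ∈ Icc a b) :
    ∫ y in a..x, f y = ∫ y in a..x, g y := by
  refine integral_congr_ae_restrict (ae_restrict_of_ae_restrict_of_subset ?_ h)
  rw [uIoc_of_le hx.1]
  exact Ioc_subset_Ioc_right hx.2

theorem IntervalIntegrable.mul_of_abs_le {f g : ℝ → ℝ} {a b C : ℝ}
    (hf : IntervalIntegrable f volume a b) (hg : Measurable g) (hC : ∀ x, |g x| ≤ C) :
    IntervalIntegrable (fun x => f x * g x) volume a b := by
  rw [intervalIntegrable_iff] at hf ⊢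
  exact hf.mul_bdd hg.aestronglyMeasurable (Filter.Eventually.of_forall hC)

theorem eqOn_zero_of_abs_le_mul_integral_abs {p : ℝ → ℝ} {a b K : ℝ}
    (hp : ContinuousOn p (Icc a b)) (h : ∀ x ∈ Icc a b, |p x| ≤ K * ∫ t in a..x, |p t|) :
    EqOn p 0 (Icc a b) := by
  intro x hx
  have hab : a ≤ b := hx.1.trans hx.2
  have hint : IntervalIntegrable (fun t => |p t|) volume a b :=
    hp.abs.intervalIntegrable_of_Icc hab
  have hderiv (y : ℝ) (hy : y ∈ Ico a b) :
      HasDerivWithinAt (fun y => ∫ t in a..y, |p t|) |p y| (Ici y) y := by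
    have hmem : Icc a b ∈ 𝓝[>] y := Icc_mem_nhdsGT_of_mem hy
    refine integral_hasDerivWithinAt_right (hint.mono_set ?_)
      ((hp.abs.stronglyMeasurableAtFilter_nhdsWithin measurableSet_Icc y).filter_mono
        (nhdsWithin_le_of_mem hmem))
      ((hp.abs y (Ico_subset_Icc_self hy)).mono_of_mem_nhdsWithin hmem)
    rw [uIcc_of_le hab, uIcc_of_le hy.1]
    exact Icc_subset_Icc_right hy.2.le
  have hG_zero := eq_zero_of_abs_deriv_le_mul_abs_self_of_eq_zero_right
    ((continuousOn_primitive_interval' hint left_mem_uIcc).mono (by rw [uIcc_of_le hab]))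
    hderiv integral_same fun y hy => by
      rw [norm_abs_eq_norm, Real.norm_eq_abs, Real.norm_of_nonneg
        (integral_nonneg hy.1 fun t _ => abs_nonneg _)]
      exact h y (Ico_subset_Icc_self hy)
  have := h x hx
  rw [hG_zero x hx, mul_zero] at this
  exact abs_nonpos_iff.mp this

theorem integral_mul_primitive_add_primitive_mul {f g : ℝ → ℝ} {a b : ℝ}
    (hf : IntervalIntegrable f volume a b) (hg : IntervalIntegrable g volume a b) :
    ∫ x in a..b, (f x * ∫ t in a..x, g t) + (∫ t in a..x, f t) * g x =
      (∫ x in a..b, f x) * ∫ x in a..b, g x := by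
  have hF := hf.absolutelyContinuousOnInterval_intervalIntegral (c := a) left_mem_uIcc
  have hG := hg.absolutelyContinuousOnInterval_intervalIntegral (c := a) left_mem_uIcc
  have := hF.integral_deriv_mul_eq_sub hG
  simp only [integral_same, zero_mul, sub_zero] at this
  rw [← this]
  refine integral_congr_ae ?_
  filter_upwards [hf.ae_hasDerivAt_integral, hg.ae_hasDerivAt_integral] with x hfx hgx hx
  have hx' := uIoc_subset_uIcc hx
  rw [(hfx hx' a left_mem_uIcc).deriv, (hgx hx' a left_mem_uIcc).deriv]

theorem ae_eq_average_of_forall_integral_mul_eq_zero {α : Type*} [MeasurableSpace α]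
    {μ : Measure α} [IsFiniteMeasure μ] {φ : α → ℝ} (hφ : Integrable φ μ)
    (h : ∀ g : α → ℝ, Measurable g → (∃ C, ∀ x, |g x| ≤ C) → ∫ x, g x ∂μ = 0 →
      ∫ x, φ x * g x ∂μ = 0) :
    φ =ᵐ[μ] fun _ => ⨍ x, φ x ∂μ := by
  rcases eq_zero_or_neZero μ with rfl | hμ
  · simp [Filter.EventuallyEq]
  refine hφ.ae_eq_of_forall_setIntegral_eq _ _ (integrable_const _) fun s hs _ => ?_
  have hμs := measureReal_nonneg (μ := μ) (s := s)
  have hμuniv := measureReal_nonneg (μ := μ) (s := univ)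
  have hg := h (fun x => s.indicator (fun _ => μ.real univ) x - μ.real s)
    ((measurable_const.indicator hs).sub measurable_const)
    ⟨μ.real univ + μ.real s, fun x => ?_⟩ ?_
  · simp only [mul_sub, ← indicator_mul_right] at hg
    rw [integral_sub ((hφ.mul_const _).indicator hs) (hφ.mul_const _),
      MeasureTheory.integral_indicator hs, MeasureTheory.integral_mul_const,
      MeasureTheory.integral_mul_const, sub_eq_zero] at hg
    rw [setIntegral_const, average_eq, smul_eq_mul, smul_eq_mul, ← mul_assoc,
      ← div_eq_mul_inv, div_mul_eq_mul_div, eq_div_iff measureReal_univ_ne_zero]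
    linarith
  · refine (abs_sub _ _).trans (add_le_add ?_ (abs_of_nonneg hμs).le)
    by_cases hx : x ∈ s <;> simp [hx, abs_of_nonneg hμuniv]
  · rw [integral_sub ((integrable_const _).indicator hs) (integrable_const _),
      MeasureTheory.integral_indicator hs]
    simp [mul_comm]

/-- A `B`-solution vanishing at `0`, with `f(x) = ∫₀ˣ f'` in place of differentiability. -/
structure IsBSolutionFromZero (B f f' : ℝ → ℝ) : Prop where
  continuousOn_deriv : ContinuousOn f' (Icc 0 1)
  eq_integral : ∀ x ∈ Icc (0:ℝ) 1, f x = ∫ y in (0:ℝ)..x, f' y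
  deriv_eq : ∀ x ∈ Icc (0:ℝ) 1, f' x = f' 0 + f x * B x - ∫ y in (0:ℝ)..x, f' y * B y

theorem IsBSolution.isBSolutionFromZero {B u u' : ℝ → ℝ} (hu : IsBSolution B u u')
    (h0 : u 0 = 0) : IsBSolutionFromZero B u u' := by
  obtain ⟨hderiv, hcont, heq⟩ := hu
  refine ⟨hcont, fun x hx => ?_, heq⟩
  have hsub : Icc 0 x ⊆ Icc (0:ℝ) 1 := Icc_subset_Icc_right hx.2
  rw [integral_eq_sub_of_hasDeriv_right_of_le hx.1
    (fun y hy => (hderiv y (hsub hy)).continuousWithinAt.mono hsub)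
    (fun y hy => ((hderiv y (hsub (Ioo_subset_Icc_self hy))).hasDerivAt
      (Icc_mem_nhds hy.1 (hy.2.trans_le hx.2))).hasDerivWithinAt)
    (hcont.intervalIntegrable_of_mem_Icc_s13 hx), h0, sub_zero]

namespace IsBSolutionFromZero

variable {B f f' g g' : ℝ → ℝ}

theorem const_mul_sub_const_mul (hB : ContinuousOn B (Icc 0 1))
    (hf : IsBSolutionFromZero B f f') (hg : IsBSolutionFromZero B g g') (a b : ℝ) :
    IsBSolutionFromZero B (fun x => a * f x - b * g x) (fun x => a * f' x - b * g' x) := by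
  have hf' := hf.continuousOn_deriv
  have hg' := hg.continuousOn_deriv
  refine ⟨(continuousOn_const.mul hf').sub (continuousOn_const.mul hg'), fun x hx => ?_,
    fun x hx => ?_⟩
  · rw [integral_sub ((hf'.intervalIntegrable_of_mem_Icc_s13 hx).const_mul a)
      ((hg'.intervalIntegrable_of_mem_Icc_s13 hx).const_mul b), intervalIntegral.integral_const_mul,
      intervalIntegral.integral_const_mul, ← hf.eq_integral x hx, ← hg.eq_integral x hx]
  · have hfB : IntervalIntegrable (fun y => f' y * B y) volume 0 x :=
      (hf'.mul hB).intervalIntegrable_of_mem_Icc_s13 hx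
    have hgB : IntervalIntegrable (fun y => g' y * B y) volume 0 x :=
      (hg'.mul hB).intervalIntegrable_of_mem_Icc_s13 hx
    simp only [sub_mul, mul_assoc]
    rw [integral_sub (hfB.const_mul a) (hgB.const_mul b), intervalIntegral.integral_const_mul,
      intervalIntegral.integral_const_mul, hf.deriv_eq x hx, hg.deriv_eq x hx]
    ring

theorem eqOn_zero (hB : ContinuousOn B (Icc 0 1)) (hf : IsBSolutionFromZero B f f')
    (h0 : f' 0 = 0) : EqOn f 0 (Icc 0 1) := by
  obtain ⟨M, hM⟩ := isCompact_Icc.exists_bound_of_continuousOn hB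
  have hf'_zero : EqOn f' 0 (Icc 0 1) := by
    refine eqOn_zero_of_abs_le_mul_integral_abs hf.continuousOn_deriv (K := 2 * M)
      fun x hx => ?_
    have hfx : |f x| ≤ ∫ y in (0:ℝ)..x, |f' y| :=
      hf.eq_integral x hx ▸ abs_integral_le_integral_abs hx.1
    have hfBx : |∫ y in (0:ℝ)..x, f' y * B y| ≤ ∫ y in (0:ℝ)..x, M * |f' y| := by
      rw [← Real.norm_eq_abs]
      refine norm_integral_le_of_norm_le hx.1 (Filter.Eventually.of_forall fun y hy => ?_)
        ((hf.continuousOn_deriv.abs.intervalIntegrable_of_mem_Icc_s13 hx).const_mul M)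
      rw [norm_mul, mul_comm, Real.norm_eq_abs]
      exact mul_le_mul_of_nonneg_right (hM y ⟨hy.1.le, hy.2.trans hx.2⟩) (abs_nonneg _)
    rw [intervalIntegral.integral_const_mul] at hfBx
    have hBx : |B x| ≤ M := hM x hx
    rw [hf.deriv_eq x hx, h0, zero_add]
    calc |f x * B x - ∫ y in (0:ℝ)..x, f' y * B y|
        ≤ |f x| * |B x| + |∫ y in (0:ℝ)..x, f' y * B y| := by
          rw [← abs_mul]; exact abs_sub _ _
      _ ≤ (∫ y in (0:ℝ)..x, |f' y|) * M + M * ∫ y in (0:ℝ)..x, |f' y| := by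
          gcongr
          exact (abs_nonneg _).trans hfx
      _ = 2 * M * ∫ y in (0:ℝ)..x, |f' y| := by ring
  intro x hx
  rw [hf.eq_integral x hx, integral_congr (g := 0) fun y hy => hf'_zero ?_]
  · simp
  · rw [uIcc_of_le hx.1] at hy
    exact ⟨hy.1, hy.2.trans hx.2⟩

end IsBSolutionFromZero

/-- The first integral of `-f'' + B' f = 0`; `IsBSolution B f f'` says it is constant. -/
noncomputable def bFirstIntegral (B f f' : ℝ → ℝ) (x : ℝ) : ℝ :=
  f' x - f x * B x + ∫ y in (0:ℝ)..x, f' y * B y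

theorem memH1_primitive {g : ℝ → ℝ} (hg : IntegrableOn g (Icc 0 1))
    (hg0 : ∫ t in (0:ℝ)..1, g t = 0) : MemH1 (fun x => ∫ t in (0:ℝ)..x, g t) g :=
  ⟨hg, hg0, fun _ _ => rfl⟩

namespace MemH1

variable {B w gw : ℝ → ℝ}

theorem apply_zero (hw : MemH1 w gw) : w 0 = 0 := by
  rw [hw.2.2 0 (left_mem_Icc.2 zero_le_one), integral_same]

theorem apply_one (hw : MemH1 w gw) : w 1 = 0 :=
  (hw.2.2 1 (right_mem_Icc.2 zero_le_one)).trans hw.2.1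

theorem intervalIntegrable (hw : MemH1 w gw) : IntervalIntegrable gw volume 0 1 :=
  (intervalIntegrable_iff_integrableOn_Icc_of_le zero_le_one).2 hw.1

theorem continuousOn (hw : MemH1 w gw) : ContinuousOn w (Icc 0 1) := by
  refine ((continuousOn_primitive_interval' hw.intervalIntegrable left_mem_uIcc).mono
    (by rw [uIcc_of_le zero_le_one])).congr fun x hx => hw.2.2 x hx

theorem integral_bFirstIntegral_mul_eq_eform (hB : ContinuousOn B (Icc 0 1)) (hw : MemH1 w gw)
    {g : ℝ → ℝ} {C : ℝ} (hg : Measurable g) (hC : ∀ x, |g x| ≤ C)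
    (hg0 : ∫ t in (0:ℝ)..1, g t = 0) :
    ∫ x in (0:ℝ)..1, bFirstIntegral B w gw x * g x =
      Eform B w gw (fun x => ∫ t in (0:ℝ)..x, g t) g := by
  have hB' : ContinuousOn B (uIcc 0 1) := by rwa [uIcc_of_le zero_le_one]
  have hw' : ContinuousOn w (uIcc 0 1) := by rw [uIcc_of_le zero_le_one]; exact hw.continuousOn
  have hgw := hw.intervalIntegrable
  have hgwB : IntervalIntegrable (fun x => gw x * B x) volume 0 1 := hgw.mul_continuousOn hB'
  have hgI : IntervalIntegrable g volume 0 1 :=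
    intervalIntegrable_const.mono_fun' hg.aestronglyMeasurable (Filter.Eventually.of_forall hC)
  have hh := continuousOn_primitive_interval' hgI left_mem_uIcc
  have hF := continuousOn_primitive_interval' hgwB left_mem_uIcc
  have hgwg : IntervalIntegrable (fun x => gw x * g x) volume 0 1 := hgw.mul_of_abs_le hg hC
  have hrest : IntervalIntegrable
      (fun x => (gw x * (∫ t in (0:ℝ)..x, g t) + w x * g x) * B x) volume 0 1 := by
    convert (hgw.mul_continuousOn (hh.mul hB')).add (hgI.mul_continuousOn (hw'.mul hB')) using 1
    funext x
    simp only [Pi.mul_apply]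
    ring
  have hibp := integral_mul_primitive_add_primitive_mul hgwB hgI
  rw [hg0, mul_zero] at hibp
  calc ∫ x in (0:ℝ)..1, bFirstIntegral B w gw x * g x
      = (∫ x in (0:ℝ)..1, gw x * g x - (gw x * (∫ t in (0:ℝ)..x, g t) + w x * g x) * B x) +
          ∫ x in (0:ℝ)..1, (gw x * B x) * (∫ t in (0:ℝ)..x, g t) +
            (∫ t in (0:ℝ)..x, gw t * B t) * g x := by
        rw [← integral_add (hgwg.sub hrest)
          ((hgwB.mul_continuousOn hh).add (hgI.continuousOn_mul hF))]
        refine integral_congr fun x _ => ?_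
        simp only [bFirstIntegral]
        ring
    _ = Eform B w gw (fun x => ∫ t in (0:ℝ)..x, g t) g := by
        rw [hibp, add_zero, integral_sub hgwg hrest, Eform]

theorem exists_isBSolutionFromZero (hB : ContinuousOn B (Icc 0 1)) (hw : MemH1 w gw)
    (hzero : ∀ h g : ℝ → ℝ, MemH1 h g → Eform B w gw h g = 0) :
    ∃ w', IsBSolutionFromZero B w w' := by
  set μ := volume.restrict (Ioc (0:ℝ) 1)
  set F := fun x => ∫ y in (0:ℝ)..x, gw y * B y
  have hF : ContinuousOn F (Icc 0 1) := by
    have := continuousOn_primitive_interval' (hw.intervalIntegrable.mul_continuousOn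
      (by rwa [uIcc_of_le zero_le_one])) left_mem_uIcc
    rwa [uIcc_of_le zero_le_one] at this
  have hφ : Integrable (bFirstIntegral B w gw) μ :=
    ((hw.1.sub ((hw.continuousOn.mul hB).integrableOn_compact isCompact_Icc)).add
      (hF.integrableOn_compact isCompact_Icc)).mono_set Ioc_subset_Icc_self
  have hconst := ae_eq_average_of_forall_integral_mul_eq_zero hφ fun g hg ⟨C, hC⟩ hg0 => by
    rw [← integral_of_le zero_le_one] at hg0 ⊢
    rw [integral_bFirstIntegral_mul_eq_eform hB hw hg hC hg0]
    exact hzero _ _ (memH1_primitive (Integrable.mono' (integrable_const C)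
      hg.aestronglyMeasurable (Filter.Eventually.of_forall hC)) hg0)
  set c := ⨍ x, bFirstIntegral B w gw x ∂μ
  have hae : gw =ᵐ[μ] fun x => c + w x * B x - F x := by
    filter_upwards [hconst] with x hx
    simp only [bFirstIntegral] at hx
    linarith
  refine ⟨fun x => c + w x * B x - F x,
    (continuousOn_const.add (hw.continuousOn.mul hB)).sub hF,
    fun x hx => (hw.2.2 x hx).trans (integral_congr_of_ae_eq_restrict_Ioc hae hx),
    fun x hx => ?_⟩
  simp only [hw.apply_zero, zero_mul, add_zero, F, integral_same, sub_zero]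
  exact congrArg _ (integral_congr_of_ae_eq_restrict_Ioc (hae.mul (.refl _ B)) hx)

end MemH1

theorem weak_homogeneous_unique_general (B : ℝ → ℝ)
    (hB : ContinuousOn B (Set.Icc 0 1))
    (hex : ∃ u u' v v' : ℝ → ℝ, IsBSolution B u u' ∧ IsBSolution B v v' ∧
      u 0 = 0 ∧ u 1 = 1 ∧ v 0 = 1 ∧ v 1 = 0)
    (w gw : ℝ → ℝ) (hw : MemH1 w gw)
    (hzero : ∀ h g : ℝ → ℝ, MemH1 h g → Eform B w gw h g = 0) :
    ∀ x ∈ Set.Icc (0:ℝ) 1, w x = 0 := by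
  obtain ⟨u, u', -, -, hu, -, hu0, hu1, -, -⟩ := hex
  have hu := hu.isBSolutionFromZero hu0
  obtain ⟨w', hw'⟩ := hw.exists_isBSolutionFromZero hB hzero
  have h1 : (1:ℝ) ∈ Icc (0:ℝ) 1 := right_mem_Icc.2 zero_le_one
  have hu'0 : u' 0 ≠ 0 := fun h => by simpa [hu1] using hu.eqOn_zero hB h h1
  have hcomb := (hw'.const_mul_sub_const_mul hB hu (u' 0) (w' 0)).eqOn_zero hB (by ring)
  have hw'0 : w' 0 = 0 := by simpa [hw.apply_one, hu1] using hcomb h1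
  intro x hx
  simpa [hw'0, hu'0] using hcomb hx

/-- Uniqueness of the weak solution of the homogeneous Dirichlet problem `Lw = 0`:
if `w ∈ H1` satisfies `E(w,h) = 0` for every `h ∈ H1`, then `w ≡ 0` on `[0,1]`. -/
theorem weak_homogeneous_unique (B : ℝ → ℝ)
    (hB : ContinuousOn B (Set.Icc 0 1)) (hB0 : B 0 = 0)
    (hex : ∃ u u' v v' : ℝ → ℝ, IsBSolution B u u' ∧ IsBSolution B v v' ∧
      u 0 = 0 ∧ u 1 = 1 ∧ v 0 = 1 ∧ v 1 = 0)
    (w gw : ℝ → ℝ) (hw : MemH1 w gw)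
    (hzero : ∀ h g : ℝ → ℝ, MemH1 h g → Eform B w gw h g = 0) :
    ∀ x ∈ Set.Icc (0:ℝ) 1, w x = 0 :=
  weak_homogeneous_unique_general B hB hex w gw hw hzero
end
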